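/- Let φ satisfy the hypotheses of the general phaseless sampling theorem: A₁,…,A_M bounded open sets, φ continuous with compact support and locally linearly independent on each A_m, every nonempty set S_k = {x : φ(x)φ(x−k) ≠ 0} meets ∪_{m=1}^M (A_m + ℤ^d), V(φ) has the local complement property on each A_m, and Γ = ∪_m Γ_m is chosen so |f|² on each A_m + l is determined by |f(γ+l)|², γ ∈ Γ_m. Then for f = Σ_k c(k)φ(·−k) and g = Σ_k d(k)φ(·−k) with |g(y)| = |f(y)| for all y ∈ Γ + ℤ^d, for each l ∈ ℤ^d and 1 ≤ m ≤ M there exists ε_{l,m} ∈ {−1,1} with d(k'+l) = ε_{l,m} c(k'+l) for all k' ∈ K_{A_m}; and if moreover the graph 𝒢_f is connected, there is a single ε ∈ {−1,1} with g = ε f. -/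

import Mathlib

/-!
Squaring `|g| = |f|` on `A_m + l` gives `(g - f)(g + f) = 0` there, so by the local complement
property one of `g ∓ f` vanishes on all of `A_m + l`, and local linear independence turns this into
`d = ± c` on `K_{A_m} + l`. Two indices `a`, `b` joined by an edge of `𝒢_f` have overlapping
translates `φ(· - a)`, `φ(· - b)`; the hypothesis on the sets `S_k` places such an overlap inside
some `A_m + l`, so `a` and `b` lie in one `K_{A_m} + l'` and carry the same sign. Connectedness of
`𝒢_f` then propagates a single sign to all nonzero coefficients, while `c(k) = 0` forces `d(k) = 0`.
-/

/-- The signal `Σ_k c(k) φ(·−k)` in the shift-invariant space `V(φ)`. -/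
noncomputable def sig (d : ℕ) (φ : (Fin d → ℝ) → ℝ) (c : (Fin d → ℤ) → ℝ) :
    (Fin d → ℝ) → ℝ :=
  fun x => ∑' k : Fin d → ℤ, c k * φ (fun i => x i - k i)

/-- `V(φ)` has the local complement property on `A`. -/
def LCPphi (d : ℕ) (φ : (Fin d → ℝ) → ℝ) (A : Set (Fin d → ℝ)) : Prop :=
  ∀ A' ⊆ A, ¬ ∃ c₁ c₂ : (Fin d → ℤ) → ℝ,
    (¬ ∀ x ∈ A, sig d φ c₁ x = 0) ∧ (¬ ∀ x ∈ A, sig d φ c₂ x = 0) ∧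
    (∀ x ∈ A', sig d φ c₁ x = 0) ∧ (∀ x ∈ A \ A', sig d φ c₂ x = 0)

/-- Adjacency relation of the graph `𝒢_f` for `f = Σ_k c(k) φ(·−k)`. -/
def GraphAdj (d : ℕ) (φ : (Fin d → ℝ) → ℝ) (c : (Fin d → ℤ) → ℝ)
    (k k' : Fin d → ℤ) : Prop :=
  k ≠ k' ∧ c k ≠ 0 ∧ c k' ≠ 0 ∧
    ∃ x : Fin d → ℝ, φ (fun i => x i - k i) * φ (fun i => x i - k' i) ≠ 0

section ShiftInvariantSpace

variable {d : ℕ} {φ : (Fin d → ℝ) → ℝ}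

lemma finite_setOf_shift_ne_zero (hsupp : HasCompactSupport φ) (x : Fin d → ℝ) :
    {k : Fin d → ℤ | φ (fun i => x i - k i) ≠ 0}.Finite := by
  obtain ⟨R, hR⟩ := hsupp.isBounded.exists_norm_le
  refine (Set.Finite.pi fun i : Fin d => Set.finite_Icc ⌈x i - R⌉ ⌊x i + R⌋).subset ?_
  intro k hk i _
  have hxk : |x i - k i| ≤ R :=
    (norm_le_pi_norm (fun i => x i - k i) i).trans (hR _ (subset_tsupport φ hk))
  rw [abs_le] at hxk
  exact ⟨Int.ceil_le.2 (by linarith), Int.le_floor.2 (by linarith)⟩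

lemma summable_coeff_mul_shift (hsupp : HasCompactSupport φ) (c : (Fin d → ℤ) → ℝ)
    (x : Fin d → ℝ) : Summable fun k : Fin d → ℤ => c k * φ (fun i => x i - k i) := by
  refine summable_of_ne_finset_zero (s := (finite_setOf_shift_ne_zero hsupp x).toFinset) ?_
  intro k hk
  rw [Set.Finite.mem_toFinset] at hk
  rw [not_not.1 hk, mul_zero]

lemma sig_add (hsupp : HasCompactSupport φ) (c₁ c₂ : (Fin d → ℤ) → ℝ) (x : Fin d → ℝ) :
    sig d φ (fun k => c₁ k + c₂ k) x = sig d φ c₁ x + sig d φ c₂ x := by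
  rw [sig, sig, sig, ← (summable_coeff_mul_shift hsupp c₁ x).tsum_add
    (summable_coeff_mul_shift hsupp c₂ x)]
  exact tsum_congr fun k => add_mul _ _ _

lemma sig_sub (hsupp : HasCompactSupport φ) (c₁ c₂ : (Fin d → ℤ) → ℝ) (x : Fin d → ℝ) :
    sig d φ (fun k => c₁ k - c₂ k) x = sig d φ c₁ x - sig d φ c₂ x := by
  rw [sig, sig, sig, ← (summable_coeff_mul_shift hsupp c₁ x).tsum_sub
    (summable_coeff_mul_shift hsupp c₂ x)]
  exact tsum_congr fun k => sub_mul _ _ _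

lemma sig_const_mul (ε : ℝ) (c : (Fin d → ℤ) → ℝ) (x : Fin d → ℝ) :
    sig d φ (fun k => ε * c k) x = ε * sig d φ c x := by
  rw [sig, sig, ← tsum_mul_left]
  exact tsum_congr fun k => mul_assoc _ _ _

lemma sig_comp_add_right (c : (Fin d → ℤ) → ℝ) (l : Fin d → ℤ) (x : Fin d → ℝ) :
    sig d φ c (fun i => x i + l i) = sig d φ (fun k => c (fun i => k i + l i)) x := by
  rw [sig, sig, ← (Equiv.addRight l).tsum_eq]
  refine tsum_congr fun k => congrArg (c _ * φ ·) (funext fun i => ?_)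
  simp only [Equiv.coe_addRight, Pi.add_apply, Int.cast_add]
  ring

lemma LCPphi.forall_eq_zero_or_forall_eq_zero {A : Set (Fin d → ℝ)} (hA : LCPphi d φ A)
    {c₁ c₂ : (Fin d → ℤ) → ℝ} (hprod : ∀ x ∈ A, sig d φ c₁ x * sig d φ c₂ x = 0) :
    (∀ x ∈ A, sig d φ c₁ x = 0) ∨ (∀ x ∈ A, sig d φ c₂ x = 0) := by
  by_contra! ⟨⟨x₁, hx₁, h₁⟩, ⟨x₂, hx₂, h₂⟩⟩
  refine hA {x ∈ A | sig d φ c₁ x = 0} (Set.sep_subset _ _)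
    ⟨c₁, c₂, fun h => h₁ (h x₁ hx₁), fun h => h₂ (h x₂ hx₂), fun x hx => hx.2, fun x hx => ?_⟩
  exact (mul_eq_zero.1 (hprod x hx.1)).resolve_left fun h₀ => hx.2 ⟨hx.1, h₀⟩

theorem exists_sign_coeff_eq_of_abs_sig_eq (hsupp : HasCompactSupport φ) {A : Set (Fin d → ℝ)}
    (hLLI : ∀ c : (Fin d → ℤ) → ℝ, (∀ x ∈ A, sig d φ c x = 0) →
      ∀ k : Fin d → ℤ, (¬ ∀ x ∈ A, φ (fun i => x i - k i) = 0) → c k = 0)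
    (hLCP : LCPphi d φ A) {a b : (Fin d → ℤ) → ℝ}
    (habs : ∀ x ∈ A, |sig d φ b x| = |sig d φ a x|) :
    ∃ ε : ℝ, (ε = 1 ∨ ε = -1) ∧
      ∀ k : Fin d → ℤ, (¬ ∀ x ∈ A, φ (fun i => x i - k i) = 0) → b k = ε * a k := by
  have hprod : ∀ x ∈ A, sig d φ (fun k => b k - a k) x * sig d φ (fun k => b k + a k) x = 0 := by
    intro x hx
    rw [sig_sub hsupp, sig_add hsupp, mul_comm, ← sq_sub_sq, ← sq_abs, habs x hx, sq_abs, sub_self]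
  rcases hLCP.forall_eq_zero_or_forall_eq_zero hprod with hsub | hadd
  · exact ⟨1, Or.inl rfl, fun k hk => by linarith [hLLI _ hsub k hk]⟩
  · exact ⟨-1, Or.inr rfl, fun k hk => by linarith [hLLI _ hadd k hk]⟩

end ShiftInvariantSpace

section SignPropagation

variable {d : ℕ} {φ : (Fin d → ℝ) → ℝ} {ι : Type*} {A : ι → Set (Fin d → ℝ)}
  {c c' : (Fin d → ℤ) → ℝ}

def SignsAgreeOnTranslates (φ : (Fin d → ℝ) → ℝ) (A : ι → Set (Fin d → ℝ))
    (c c' : (Fin d → ℤ) → ℝ) : Prop :=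
  ∀ (l : Fin d → ℤ) (m : ι), ∃ ε : ℝ, (ε = 1 ∨ ε = -1) ∧
    ∀ k' : Fin d → ℤ, (¬ ∀ x ∈ A m, φ (fun i => x i - k' i) = 0) →
      c' (fun i => k' i + l i) = ε * c (fun i => k' i + l i)

def OverlapsMeetTranslates (φ : (Fin d → ℝ) → ℝ) (A : ι → Set (Fin d → ℝ)) : Prop :=
  ∀ k : Fin d → ℤ, (∃ x, φ x * φ (fun i => x i - k i) ≠ 0) →
    ∃ x, φ x * φ (fun i => x i - k i) ≠ 0 ∧
      ∃ (m : ι) (l : Fin d → ℤ), (fun i => x i - l i) ∈ A m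

namespace SignsAgreeOnTranslates

theorem exists_sign_of_overlap (h : SignsAgreeOnTranslates φ A c c') {y : Fin d → ℝ}
    {j l : Fin d → ℤ} {m : ι} (hy : φ y * φ (fun i => y i - j i) ≠ 0)
    (hyl : (fun i => y i - l i) ∈ A m) (a : Fin d → ℤ) :
    ∃ ε : ℝ, (ε = 1 ∨ ε = -1) ∧ c' a = ε * c a ∧
      c' (fun i => a i + j i) = ε * c (fun i => a i + j i) := by
  obtain ⟨ε, hε, hco⟩ := h (fun i => l i + a i) m
  -- both `a` and `a + j` lie in `K_{A m} + (l + a)`, witnessed by the point `y - l ∈ A m`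
  have hK : ∀ k : Fin d → ℤ, φ (fun i => y i - k i) ≠ 0 →
      c' (fun i => a i + k i) = ε * c (fun i => a i + k i) := by
    intro k hk
    have hkl : (fun i => (y i - l i) - ((k - l : Fin d → ℤ) i : ℝ)) = fun i => y i - k i := by
      funext i; push_cast [Pi.sub_apply]; ring
    have hidx : (fun i => (k - l : Fin d → ℤ) i + (l i + a i)) = fun i => a i + k i := by
      funext i; simp only [Pi.sub_apply]; ring
    simpa only [hidx] using hco (k - l) fun hzero => hk (hkl ▸ hzero _ hyl)
  refine ⟨ε, hε, ?_, hK j (right_ne_zero_of_mul hy)⟩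
  simpa using hK 0 (by simpa using left_ne_zero_of_mul hy)

theorem coeff_eq_of_graphAdj (h : SignsAgreeOnTranslates φ A c c')
    (hS : OverlapsMeetTranslates φ A)
    {a b : Fin d → ℤ} (hab : GraphAdj d φ c a b) {ε : ℝ} (ha : c' a = ε * c a) :
    c' b = ε * c b := by
  obtain ⟨-, hca, -, x, hx⟩ := hab
  have hxa : (fun i => (x i - a i) - ((b - a : Fin d → ℤ) i : ℝ)) = fun i => x i - b i := by
    funext i; push_cast [Pi.sub_apply]; ring
  obtain ⟨y, hy, m, l, hyl⟩ := hS (b - a) ⟨fun i => x i - a i, by rwa [hxa]⟩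
  obtain ⟨ε', -, hεa, hεb⟩ := h.exists_sign_of_overlap hy hyl a
  have hε : ε' = ε := mul_right_cancel₀ hca (hεa.symm.trans ha)
  have hidx : (fun i => a i + (b - a : Fin d → ℤ) i) = b := by
    funext i; simp
  rwa [hidx, hε] at hεb

theorem coeff_eq_of_reflTransGen (h : SignsAgreeOnTranslates φ A c c')
    (hS : OverlapsMeetTranslates φ A)
    {a b : Fin d → ℤ} (hab : Relation.ReflTransGen (GraphAdj d φ c) a b) {ε : ℝ}
    (ha : c' a = ε * c a) : c' b = ε * c b := by
  induction hab with
  | refl => exact ha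
  | tail _ hadj ih => exact h.coeff_eq_of_graphAdj hS hadj ih

theorem exists_sign_forall_coeff_eq (h : SignsAgreeOnTranslates φ A c c')
    (hS : OverlapsMeetTranslates φ A)
    (hconn : ∀ k k' : Fin d → ℤ, c k ≠ 0 → c k' ≠ 0 →
      Relation.ReflTransGen (GraphAdj d φ c) k k')
    (hφ : ∃ y, φ y ≠ 0) :
    ∃ ε : ℝ, (ε = 1 ∨ ε = -1) ∧ ∀ k, c' k = ε * c k := by
  obtain ⟨y, hy⟩ := hφ
  obtain ⟨y, hy, m, l, hyl⟩ := hS 0 ⟨y, by simpa using mul_ne_zero hy hy⟩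
  have hsign : ∀ k, ∃ ε : ℝ, (ε = 1 ∨ ε = -1) ∧ c' k = ε * c k := fun k =>
    let ⟨ε, hε, hk, _⟩ := h.exists_sign_of_overlap hy hyl k
    ⟨ε, hε, hk⟩
  have hzero : ∀ k, c k = 0 → c' k = 0 := fun k hk => by
    obtain ⟨ε, -, hεk⟩ := hsign k
    rw [hεk, hk, mul_zero]
  by_cases hc : ∃ k₀, c k₀ ≠ 0
  · obtain ⟨k₀, hk₀⟩ := hc
    obtain ⟨ε, hε, hεk₀⟩ := hsign k₀
    refine ⟨ε, hε, fun k => ?_⟩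
    by_cases hk : c k = 0
    · rw [hzero k hk, hk, mul_zero]
    · exact h.coeff_eq_of_reflTransGen hS (hconn k₀ k hk₀ hk) hεk₀
  · push Not at hc
    exact ⟨1, Or.inl rfl, fun k => by rw [hzero k (hc k), hc k, mul_zero]⟩

end SignsAgreeOnTranslates

end SignPropagation

theorem stmt14_general (d M : ℕ) (φ : (Fin d → ℝ) → ℝ)
    (hsupp : HasCompactSupport φ)
    (A : Fin M → Set (Fin d → ℝ))
    (hLLI : ∀ m, ∀ c : (Fin d → ℤ) → ℝ, (∀ x ∈ A m, sig d φ c x = 0) →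
      ∀ k : Fin d → ℤ, (¬ ∀ x ∈ A m, φ (fun i => x i - k i) = 0) → c k = 0)
    (hS : ∀ k : Fin d → ℤ, (∃ x, φ x * φ (fun i => x i - k i) ≠ 0) →
      ∃ x, φ x * φ (fun i => x i - k i) ≠ 0 ∧
        ∃ (m : Fin M) (l : Fin d → ℤ), (fun i => x i - l i) ∈ A m)
    (hLCP : ∀ m, LCPphi d φ (A m))
    (Γ : Fin M → Finset (Fin d → ℝ))
    (hdet : ∀ m, ∀ l : Fin d → ℤ, ∀ c c' : (Fin d → ℤ) → ℝ,
      (∀ γ ∈ Γ m, |sig d φ c' (fun i => γ i + l i)| = |sig d φ c (fun i => γ i + l i)|) →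
      ∀ x ∈ A m, |sig d φ c' (fun i => x i + l i)| = |sig d φ c (fun i => x i + l i)|)
    (c c' : (Fin d → ℤ) → ℝ)
    (hsamp : ∀ m, ∀ γ ∈ Γ m, ∀ l : Fin d → ℤ,
      |sig d φ c' (fun i => γ i + l i)| = |sig d φ c (fun i => γ i + l i)|) :
    (∀ (l : Fin d → ℤ) (m : Fin M), ∃ ε : ℝ, (ε = 1 ∨ ε = -1) ∧
      ∀ k' : Fin d → ℤ, (¬ ∀ x ∈ A m, φ (fun i => x i - k' i) = 0) →
        c' (fun i => k' i + l i) = ε * c (fun i => k' i + l i)) ∧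
    ((∀ k k' : Fin d → ℤ, c k ≠ 0 → c k' ≠ 0 →
        Relation.ReflTransGen (GraphAdj d φ c) k k') →
      ∃ ε : ℝ, (ε = 1 ∨ ε = -1) ∧ ∀ x, sig d φ c' x = ε * sig d φ c x) := by
  have hloc : SignsAgreeOnTranslates φ A c c' := fun l m =>
    exists_sign_coeff_eq_of_abs_sig_eq hsupp (hLLI m) (hLCP m) fun x hx => by
      simpa only [sig_comp_add_right] using hdet m l c c' (fun γ hγ => hsamp m γ hγ l) x hx
  refine ⟨hloc, fun hconn => ?_⟩
  by_cases hφ : ∃ y, φ y ≠ 0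
  · obtain ⟨ε, hε, hcoeff⟩ := hloc.exists_sign_forall_coeff_eq hS hconn hφ
    exact ⟨ε, hε, fun x => (congrArg (sig d φ · x) (funext hcoeff)).trans (sig_const_mul ε c x)⟩
  · push Not at hφ
    exact ⟨1, Or.inl rfl, fun x => by simp [sig, hφ]⟩

/-- under the hypotheses of the general phaseless sampling theorem,
if `|g| = |f|` on `Γ + ℤ^d`, then on each `K_{A_m} + l` the coefficients of `g`
equal those of `f` up to a sign `ε_{l,m} ∈ {−1,1}`; and if moreover `𝒢_f` is
connected, then `g = ε f` for a single sign `ε ∈ {−1,1}`. -/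
theorem stmt14 (d M : ℕ) (φ : (Fin d → ℝ) → ℝ)
    (hcont : Continuous φ) (hsupp : HasCompactSupport φ)
    (A : Fin M → Set (Fin d → ℝ))
    (hAo : ∀ m, IsOpen (A m)) (hAb : ∀ m, Bornology.IsBounded (A m))
    (hLLI : ∀ m, ∀ c : (Fin d → ℤ) → ℝ, (∀ x ∈ A m, sig d φ c x = 0) →
      ∀ k : Fin d → ℤ, (¬ ∀ x ∈ A m, φ (fun i => x i - k i) = 0) → c k = 0)
    (hS : ∀ k : Fin d → ℤ, (∃ x, φ x * φ (fun i => x i - k i) ≠ 0) →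
      ∃ x, φ x * φ (fun i => x i - k i) ≠ 0 ∧
        ∃ (m : Fin M) (l : Fin d → ℤ), (fun i => x i - l i) ∈ A m)
    (hLCP : ∀ m, LCPphi d φ (A m))
    (Γ : Fin M → Finset (Fin d → ℝ)) (hΓA : ∀ m, ↑(Γ m) ⊆ A m)
    (hdet : ∀ m, ∀ l : Fin d → ℤ, ∀ c c' : (Fin d → ℤ) → ℝ,
      (∀ γ ∈ Γ m, |sig d φ c' (fun i => γ i + l i)| = |sig d φ c (fun i => γ i + l i)|) →
      ∀ x ∈ A m, |sig d φ c' (fun i => x i + l i)| = |sig d φ c (fun i => x i + l i)|)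
    (c c' : (Fin d → ℤ) → ℝ)
    (hsamp : ∀ m, ∀ γ ∈ Γ m, ∀ l : Fin d → ℤ,
      |sig d φ c' (fun i => γ i + l i)| = |sig d φ c (fun i => γ i + l i)|) :
    (∀ (l : Fin d → ℤ) (m : Fin M), ∃ ε : ℝ, (ε = 1 ∨ ε = -1) ∧
      ∀ k' : Fin d → ℤ, (¬ ∀ x ∈ A m, φ (fun i => x i - k' i) = 0) →
        c' (fun i => k' i + l i) = ε * c (fun i => k' i + l i)) ∧
    ((∀ k k' : Fin d → ℤ, c k ≠ 0 → c k' ≠ 0 →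
        Relation.ReflTransGen (GraphAdj d φ c) k k') →
      ∃ ε : ℝ, (ε = 1 ∨ ε = -1) ∧ ∀ x, sig d φ c' x = ε * sig d φ c x) :=
  stmt14_general d M φ hsupp A hLLI hS hLCP Γ hdet c c' hsamp
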